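/- Let P_n denote the n-th Legendre polynomial, defined by Rodrigues' formula P_n(x) = 1/(2ⁿ·n!) · dⁿ/dxⁿ (x²−1)ⁿ. For every nonzero real ω and all natural numbers j and k, ∫_{−1}^{1} P_j(x)·P_k(x)·sin(2ωx) dx = (−1 + (−1)^{j+k})·cos(2ω)/(2ω) + (1/(2ω))·[ Σ_{l=0}^{⌊(j−1)/2⌋} (2(j−1−2l)+1)·∫_{−1}^{1} P_{j−1−2l}(x)·P_k(x)·cos(2ωx) dx + Σ_{l=0}^{⌊(k−1)/2⌋} (2(k−1−2l)+1)·∫_{−1}^{1} P_j(x)·P_{k−1−2l}(x)·cos(2ωx) dx ], where an empty sum (when j = 0 or k = 0 respectively) is zero. -/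

import Mathlib

open Polynomial Finset

lemma dcomm (m : ℕ) (g : Polynomial ℝ) :
    derivative (derivative^[m] g) = derivative^[m] (derivative g) := by
  exact (Function.iterate_succ_apply' _ m g).symm.trans (Function.iterate_succ_apply _ m g)

noncomputable def qP (n : ℕ) : Polynomial ℝ := derivative^[n] ((X ^ 2 - 1) ^ n)
noncomputable def tP (n : ℕ) : Polynomial ℝ := derivative^[n] ((X ^ 2 - 1) ^ (n + 1))

lemma leib1 (m : ℕ) (g : Polynomial ℝ) :
    derivative^[m + 1] (X * g) =
      X * derivative^[m + 1] g + ((m : Polynomial ℝ) + 1) * derivative^[m] g := by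
  induction m generalizing g with
  | zero => simp [derivative_mul]; ring
  | succ m ih =>
    rw [Function.iterate_succ_apply', ih, Function.iterate_succ_apply',
      Function.iterate_succ_apply']
    simp [derivative_mul, dcomm, map_ofNat]
    push_cast
    ring

lemma leib2 (m : ℕ) (g : Polynomial ℝ) :
    derivative^[m + 2] ((X ^ 2 - 1) * g) =
      (X ^ 2 - 1) * derivative^[m + 2] g
        + (2 * ((m : Polynomial ℝ) + 2)) * (X * derivative^[m + 1] g)
        + (((m : Polynomial ℝ) + 2) * ((m : Polynomial ℝ) + 1)) * derivative^[m] g := by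
  induction m generalizing g with
  | zero =>
    show derivative (derivative _) = _
    simp [derivative_mul, map_ofNat]
    ring
  | succ m ih =>
    rw [show m + 1 + 2 = (m + 2) + 1 from rfl, Function.iterate_succ_apply', ih]
    simp [derivative_mul, dcomm, map_ofNat, Function.iterate_succ_apply']
    push_cast
    ring

lemma deriv_pow_sq_sub_one (n : ℕ) :
    derivative (((X : Polynomial ℝ) ^ 2 - 1) ^ (n + 1)) =
      (2 * ((n : Polynomial ℝ) + 1)) * (X * (X ^ 2 - 1) ^ n) := by
  rw [derivative_pow]
  simp [map_ofNat]
  push_cast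
  ring

lemma qA (n : ℕ) :
    derivative (qP (n + 1)) =
      (2 * ((n : Polynomial ℝ) + 1)) * (X * derivative (qP n))
        + (2 * ((n : Polynomial ℝ) + 1) * ((n : Polynomial ℝ) + 1)) * qP n := by
  have h : derivative (qP (n + 1)) = derivative^[n + 1] (derivative (((X:Polynomial ℝ) ^ 2 - 1) ^ (n + 1))) := by
    rw [qP, dcomm]
  rw [h, deriv_pow_sq_sub_one]
  have hc : ∀ p : Polynomial ℝ, derivative^[n+1] ((2 * ((n : Polynomial ℝ) + 1)) * p)
      = (2 * ((n : Polynomial ℝ) + 1)) * derivative^[n+1] p := by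
    intro p
    have := Polynomial.iterate_derivative_C_mul (2 * ((n:ℝ) + 1)) p (n+1)
    simpa [map_ofNat] using this
  rw [hc, leib1, Function.iterate_succ_apply, qP, dcomm]
  ring

lemma qB (n : ℕ) :
    qP (n + 2) =
      (2 * ((n : Polynomial ℝ) + 2)) * (X * qP (n + 1))
        + (2 * ((n : Polynomial ℝ) + 2) * ((n : Polynomial ℝ) + 1)) * tP n := by
  have h : qP (n + 2) = derivative^[n + 1] (derivative (((X:Polynomial ℝ) ^ 2 - 1) ^ (n + 2))) := by
    rw [qP, Function.iterate_succ_apply]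
  rw [h, show n + 2 = (n + 1) + 1 from rfl, deriv_pow_sq_sub_one]
  have hc := Polynomial.iterate_derivative_C_mul (2 * ((n:ℝ) + 1 + 1)) (X * ((X:Polynomial ℝ)^2 - 1)^(n+1)) (n+1)
  simp only [map_mul, map_add, map_one, map_ofNat, Polynomial.C_eq_natCast] at hc
  push_cast
  rw [hc, leib1, qP, tP]
  push_cast
  ring

lemma qC (n : ℕ) :
    qP (n + 2) =
      (X ^ 2 - 1) * derivative (qP (n + 1))
        + (2 * ((n : Polynomial ℝ) + 2)) * (X * qP (n + 1))
        + (((n : Polynomial ℝ) + 2) * ((n : Polynomial ℝ) + 1)) * tP n := by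
  have h : qP (n + 2) = derivative^[n + 2] ((X ^ 2 - 1) * ((X:Polynomial ℝ) ^ 2 - 1) ^ (n + 1)) := by
    rw [qP, ← pow_succ']
  rw [h, leib2, qP, tP, dcomm, show n + 2 = n + 1 + 1 from rfl,
    Function.iterate_succ_apply', dcomm]

lemma qC' (n : ℕ) :
    (X ^ 2 - 1) * derivative (qP (n + 1)) =
      (((n : Polynomial ℝ) + 1) * ((n : Polynomial ℝ) + 2)) * tP n := by
  linear_combination (qB n) - (qC n)

lemma qIII : ∀ n : ℕ, X * derivative (qP (n + 1)) =
    (2 * ((n : Polynomial ℝ) + 1)) * derivative (qP n) + ((n : Polynomial ℝ) + 1) * qP (n + 1)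
  | 0 => by
    have h0 : qP 0 = 1 := by simp [qP]
    have h1 : qP 1 = 2 * X := by
      simp [qP, derivative_sub, derivative_one, derivative_X_pow, map_ofNat]
      exact one_add_one_eq_two
    rw [h0, h1]
    simp
    ring
  | (m + 1) => by
    have h1 := qA (m + 1)
    have h2 := qB m
    have h3 := qC' m
    push_cast at h1 h2 h3 ⊢
    linear_combination X * h1 - ((m : Polynomial ℝ) + 2) * h2 + 2 * ((m : Polynomial ℝ) + 2) * h3

lemma qRec (n : ℕ) :
    derivative (qP (n + 2)) =
      (4 * ((n : Polynomial ℝ) + 1) * ((n : Polynomial ℝ) + 2)) * derivative (qP n)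
        + (2 * ((n : Polynomial ℝ) + 2) * (2 * (n : Polynomial ℝ) + 3)) * qP (n + 1) := by
  have h1 := qA (n + 1)
  have h2 := qIII n
  push_cast at h1 h2 ⊢
  linear_combination h1 + 2 * ((n : Polynomial ℝ) + 2) * h2

/-- The `n`-th Legendre polynomial, via Rodrigues' formula
`P_n(x) = 1/(2^n n!) · dⁿ/dxⁿ (x² − 1)ⁿ`. -/
noncomputable def legendreP (n : ℕ) : Polynomial ℝ :=
  (1 / (2 ^ n * n.factorial) : ℝ) •
    (Polynomial.derivative^[n] ((Polynomial.X ^ 2 - 1) ^ n))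


lemma legendreP_eq (n : ℕ) :
    legendreP n = C (1 / (2 ^ n * n.factorial) : ℝ) * qP n := by
  rw [legendreP, qP, smul_eq_C_mul]

lemma legendre_deriv_rec (n : ℕ) :
    derivative (legendreP (n + 2)) =
      derivative (legendreP n) + C ((2 * n + 3 : ℕ) : ℝ) * legendreP (n + 1) := by
  have hfac : ∀ m : ℕ, ((m.factorial : ℝ)) ≠ 0 := fun m => Nat.cast_ne_zero.mpr m.factorial_ne_zero
  have h2 : (2 : ℝ) ≠ 0 := two_ne_zero
  set c₂ : ℝ := 1 / (2 ^ (n + 2) * (n + 2).factorial) with hc₂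
  set c₁ : ℝ := 1 / (2 ^ (n + 1) * (n + 1).factorial) with hc₁
  set c₀ : ℝ := 1 / (2 ^ n * n.factorial) with hc₀
  have hA : (C c₂ : Polynomial ℝ) * (4 * ((n : Polynomial ℝ) + 1) * ((n : Polynomial ℝ) + 2)) = C c₀ := by
    rw [show (4*((n:Polynomial ℝ)+1)*((n:Polynomial ℝ)+2)) = C (4*((n:ℝ)+1)*((n:ℝ)+2)) by
      simp only [map_mul, map_add, map_ofNat, map_one, Polynomial.C_eq_natCast], ← map_mul]
    congr 1
    rw [hc₂, hc₀]
    have : ((n+2).factorial : ℝ) = ((n+2 : ℕ) : ℝ) * ((n+1 : ℕ) : ℝ) * (n.factorial : ℝ) := by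
      rw [Nat.factorial_succ (n+1), Nat.factorial_succ n]; push_cast; ring
    rw [this]
    field_simp
    push_cast
    ring
  have hB : (C c₂ : Polynomial ℝ) * (2 * ((n : Polynomial ℝ) + 2) * (2 * (n : Polynomial ℝ) + 3)) =
      C ((2 * n + 3 : ℕ) : ℝ) * C c₁ := by
    rw [show (2*((n:Polynomial ℝ)+2)*(2*(n:Polynomial ℝ)+3)) = C (2*((n:ℝ)+2)*(2*(n:ℝ)+3)) by
      simp only [map_mul, map_add, map_ofNat, map_one, Polynomial.C_eq_natCast],
      ← map_mul, ← map_mul]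
    congr 1
    rw [hc₂, hc₁]
    have : ((n+2).factorial : ℝ) = ((n+2 : ℕ) : ℝ) * ((n+1).factorial : ℝ) := by
      rw [Nat.factorial_succ (n+1)]; push_cast; ring
    rw [this]
    push_cast
    field_simp
    ring
  calc derivative (legendreP (n + 2)) = C c₂ * derivative (qP (n + 2)) := by
        rw [legendreP_eq, derivative_C_mul]
    _ = (C c₂ * (4 * ((n : Polynomial ℝ) + 1) * ((n : Polynomial ℝ) + 2))) * derivative (qP n)
        + (C c₂ * (2 * ((n : Polynomial ℝ) + 2) * (2 * (n : Polynomial ℝ) + 3))) * qP (n + 1) := by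
        rw [qRec n]; ring
    _ = C c₀ * derivative (qP n) + (C ((2 * n + 3 : ℕ) : ℝ) * C c₁) * qP (n + 1) := by
        rw [hA, hB]
    _ = derivative (legendreP n) + C ((2 * n + 3 : ℕ) : ℝ) * legendreP (n + 1) := by
        rw [legendreP_eq, legendreP_eq, derivative_C_mul]; ring

lemma legendreP_zero : legendreP 0 = 1 := by
  simp [legendreP]

lemma legendreP_one : legendreP 1 = X := by
  simp [legendreP, derivative_sub, derivative_one, derivative_X_pow, map_ofNat]
  rw [smul_eq_C_mul]
  norm_num
  rw [show ((2:Polynomial ℝ)) = C (2:ℝ) from (map_ofNat C 2).symm, ← mul_assoc, ← map_mul]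
  norm_num

lemma legendre_deriv_sum : ∀ n : ℕ, derivative (legendreP n) =
    ∑ l ∈ Finset.range ((n + 1) / 2),
      C (((2 * (n - 1 - 2 * l) + 1 : ℕ) : ℝ)) * legendreP (n - 1 - 2 * l)
  | 0 => by simp [legendreP_zero]
  | 1 => by
    simp [legendreP_one, legendreP_zero]
  | (n + 2) => by
    rw [legendre_deriv_rec n, legendre_deriv_sum n]
    have hh : (n + 2 + 1) / 2 = (n + 1) / 2 + 1 := by omega
    rw [hh, Finset.sum_range_succ']
    have h0 : n + 2 - 1 - 2 * 0 = n + 1 := by omega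
    rw [h0]
    congr 1
    · apply Finset.sum_congr rfl
      intro l _
      have : n + 2 - 1 - 2 * (l + 1) = n - 1 - 2 * l := by omega
      rw [this]

lemma sq_sub_one_split (n : ℕ) :
    ((X : Polynomial ℝ) ^ 2 - 1) ^ n = (X - C 1) ^ n * (X - C (-1)) ^ n := by
  rw [← mul_pow]
  congr 1
  simp only [map_one, map_neg]
  ring

lemma qP_eval_one (n : ℕ) : (qP n).eval 1 = 2 ^ n * n.factorial := by
  rw [qP, sq_sub_one_split, Polynomial.iterate_derivative_mul, Polynomial.eval_finset_sum]
  rw [Finset.sum_eq_single 0]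
  · simp only [Nat.choose_zero_right, one_smul, Nat.sub_zero, Function.iterate_zero_apply,
      Polynomial.iterate_derivative_X_sub_pow_self]
    simp
    ring
  · intro k hk hk0
    rw [Polynomial.iterate_derivative_X_sub_pow]
    have : n - (n - k) = k := Nat.sub_sub_self (Nat.lt_succ_iff.mp (Finset.mem_range.mp hk))
    rw [this]
    simp [zero_pow hk0] <;> tauto
  · intro h
    exact absurd (Finset.mem_range.mpr (Nat.succ_pos n)) h

lemma qP_eval_neg_one (n : ℕ) : (qP n).eval (-1) = (-2) ^ n * n.factorial := by
  rw [qP, sq_sub_one_split, Polynomial.iterate_derivative_mul, Polynomial.eval_finset_sum]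
  rw [Finset.sum_eq_single n]
  · simp only [Nat.choose_self, one_smul, Nat.sub_self, Function.iterate_zero_apply,
      Polynomial.iterate_derivative_X_sub_pow_self]
    simp
    left
    norm_num
  · intro k hk hk0
    rw [Polynomial.iterate_derivative_X_sub_pow (c := (-1:ℝ))]
    have hkn : k ≤ n := Nat.lt_succ_iff.mp (Finset.mem_range.mp hk)
    have hnk : n - k ≠ 0 := by omega
    simp [zero_pow hnk] <;> tauto
  · intro h
    exact absurd (Finset.mem_range.mpr (Nat.lt_succ_self n)) h

lemma legendreP_eval_one (n : ℕ) : (legendreP n).eval 1 = 1 := by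
  rw [legendreP_eq, eval_mul, eval_C, qP_eval_one]
  have h1 : ((n.factorial : ℝ)) ≠ 0 := Nat.cast_ne_zero.mpr n.factorial_ne_zero
  have h2 : (2 : ℝ) ^ n ≠ 0 := pow_ne_zero n two_ne_zero
  field_simp

lemma legendreP_eval_neg_one (n : ℕ) : (legendreP n).eval (-1) = (-1) ^ n := by
  rw [legendreP_eq, eval_mul, eval_C, qP_eval_neg_one]
  have h1 : ((n.factorial : ℝ)) ≠ 0 := Nat.cast_ne_zero.mpr n.factorial_ne_zero
  have h2 : (2 : ℝ) ^ n ≠ 0 := pow_ne_zero n two_ne_zero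
  rw [show ((-2 : ℝ)) ^ n = (-1) ^ n * 2 ^ n by rw [← neg_one_mul, mul_pow]]
  field_simp

lemma poly_ibp (ω : ℝ) (hω : ω ≠ 0) (f : Polynomial ℝ) :
    ∫ x in (-1:ℝ)..1, f.eval x * Real.sin (2*ω*x) =
      (f.eval (-1) - f.eval 1) * Real.cos (2*ω) / (2*ω)
        + (1/(2*ω)) * ∫ x in (-1:ℝ)..1, (derivative f).eval x * Real.cos (2*ω*x) := by
  have h2ω : 2*ω ≠ 0 := mul_ne_zero two_ne_zero hω
  have hu : ∀ x ∈ Set.uIcc (-1:ℝ) 1, HasDerivAt (fun y => f.eval y) ((derivative f).eval x) x :=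
    fun x _ => f.hasDerivAt x
  have hv : ∀ x ∈ Set.uIcc (-1:ℝ) 1,
      HasDerivAt (fun y => -Real.cos (2*ω*y) / (2*ω)) (Real.sin (2*ω*x)) x := by
    intro x _
    have h1 : HasDerivAt (fun y : ℝ => 2*ω*y) (2*ω) x := by
      simpa using (hasDerivAt_id x).const_mul (2*ω)
    have h2 := (h1.cos).neg.div_const (2*ω)
    refine h2.congr_deriv ?_
    rw [neg_mul, neg_neg, mul_div_assoc, div_self h2ω, mul_one]
  have hint1 : IntervalIntegrable (fun x => (derivative f).eval x)
      MeasureTheory.volume (-1:ℝ) 1 :=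
    (f.derivative.continuous).intervalIntegrable _ _
  have hint2 : IntervalIntegrable (fun x => Real.sin (2*ω*x))
      MeasureTheory.volume (-1:ℝ) 1 :=
    (Real.continuous_sin.comp (continuous_const.mul continuous_id)).intervalIntegrable _ _
  have hibp := intervalIntegral.integral_mul_deriv_eq_deriv_mul hu hv hint1 hint2
  rw [hibp]
  have hre : ∀ x : ℝ, (derivative f).eval x * (-Real.cos (2*ω*x) / (2*ω)) =
      (-(1/(2*ω))) * ((derivative f).eval x * Real.cos (2*ω*x)) := by
    intro x; field_simp
  simp only [hre]
  rw [intervalIntegral.integral_const_mul]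
  rw [show (2*ω*(-1):ℝ) = -(2*ω) by ring, Real.cos_neg, mul_one]
  field_simp
  ring

theorem stmt_15 (ω : ℝ) (hω : ω ≠ 0) (j k : ℕ) :
    ∫ x in (-1 : ℝ)..1,
        (legendreP j).eval x * (legendreP k).eval x * Real.sin (2 * ω * x) =
      (-1 + (-1 : ℝ) ^ (j + k)) * Real.cos (2 * ω) / (2 * ω) +
      (1 / (2 * ω)) *
        ((∑ l ∈ Finset.range ((j + 1) / 2),
            ((2 * (j - 1 - 2 * l) + 1 : ℕ) : ℝ) *
              ∫ x in (-1 : ℝ)..1,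
                (legendreP (j - 1 - 2 * l)).eval x * (legendreP k).eval x *
                  Real.cos (2 * ω * x)) +
          ∑ l ∈ Finset.range ((k + 1) / 2),
            ((2 * (k - 1 - 2 * l) + 1 : ℕ) : ℝ) *
              ∫ x in (-1 : ℝ)..1,
                (legendreP j).eval x * (legendreP (k - 1 - 2 * l)).eval x *
                  Real.cos (2 * ω * x)) := by
  have contmul : Continuous fun x : ℝ => Real.cos (2 * ω * x) :=
    Real.continuous_cos.comp (continuous_const.mul continuous_id)
  have contP : ∀ a b : ℕ,
      Continuous fun x : ℝ => (legendreP a).eval x * (legendreP b).eval x * Real.cos (2*ω*x) :=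
    fun a b => (((legendreP a).continuous).mul ((legendreP b).continuous)).mul contmul
  have hstep1 : (∫ x in (-1 : ℝ)..1,
        (legendreP j).eval x * (legendreP k).eval x * Real.sin (2 * ω * x))
      = ∫ x in (-1 : ℝ)..1, (legendreP j * legendreP k).eval x * Real.sin (2 * ω * x) := by
    simp [eval_mul]
  rw [hstep1, poly_ibp ω hω]
  have hb : ((legendreP j * legendreP k).eval (-1) - (legendreP j * legendreP k).eval 1)
      = (-1 + (-1:ℝ)^(j+k)) := by
    rw [eval_mul, eval_mul, legendreP_eval_one, legendreP_eval_one,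
      legendreP_eval_neg_one, legendreP_eval_neg_one, ← pow_add]
    ring
  rw [hb]
  congr 1
  congr 1
  -- key : the integral of the derivative
  have h1 : ∀ x : ℝ, (derivative (legendreP j * legendreP k)).eval x * Real.cos (2*ω*x)
      = (∑ l ∈ Finset.range ((j+1)/2), ((2*(j-1-2*l)+1:ℕ):ℝ) *
            ((legendreP (j-1-2*l)).eval x * (legendreP k).eval x * Real.cos (2*ω*x)))
        + (∑ l ∈ Finset.range ((k+1)/2), ((2*(k-1-2*l)+1:ℕ):ℝ) *
            ((legendreP j).eval x * (legendreP (k-1-2*l)).eval x * Real.cos (2*ω*x))) := by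
    intro x
    rw [derivative_mul, eval_add, eval_mul, eval_mul, legendre_deriv_sum j, legendre_deriv_sum k,
      eval_finset_sum, eval_finset_sum, add_mul, Finset.sum_mul, Finset.sum_mul]
    congr 1
    · apply Finset.sum_congr rfl; intro l _; simp [eval_mul, eval_C]; ring
    · rw [Finset.mul_sum, Finset.sum_mul]
      apply Finset.sum_congr rfl; intro l _; simp [eval_mul, eval_C]; ring
  have hintsum1 : IntervalIntegrable (fun x => ∑ l ∈ Finset.range ((j+1)/2),
      ((2*(j-1-2*l)+1:ℕ):ℝ) *
        ((legendreP (j-1-2*l)).eval x * (legendreP k).eval x * Real.cos (2*ω*x)))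
      MeasureTheory.volume (-1:ℝ) 1 := by
    apply Continuous.intervalIntegrable
    exact continuous_finset_sum _ fun l _ => continuous_const.mul (contP _ _)
  have hintsum2 : IntervalIntegrable (fun x => ∑ l ∈ Finset.range ((k+1)/2),
      ((2*(k-1-2*l)+1:ℕ):ℝ) *
        ((legendreP j).eval x * (legendreP (k-1-2*l)).eval x * Real.cos (2*ω*x)))
      MeasureTheory.volume (-1:ℝ) 1 := by
    apply Continuous.intervalIntegrable
    exact continuous_finset_sum _ fun l _ => continuous_const.mul (contP _ _)
  calc (∫ x in (-1:ℝ)..1, (derivative (legendreP j * legendreP k)).eval x * Real.cos (2*ω*x))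
      = ∫ x in (-1:ℝ)..1, ((∑ l ∈ Finset.range ((j+1)/2), ((2*(j-1-2*l)+1:ℕ):ℝ) *
            ((legendreP (j-1-2*l)).eval x * (legendreP k).eval x * Real.cos (2*ω*x)))
        + (∑ l ∈ Finset.range ((k+1)/2), ((2*(k-1-2*l)+1:ℕ):ℝ) *
            ((legendreP j).eval x * (legendreP (k-1-2*l)).eval x * Real.cos (2*ω*x)))) := by
        apply intervalIntegral.integral_congr
        intro x _
        exact h1 x
    _ = (∫ x in (-1:ℝ)..1, ∑ l ∈ Finset.range ((j+1)/2), ((2*(j-1-2*l)+1:ℕ):ℝ) *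
            ((legendreP (j-1-2*l)).eval x * (legendreP k).eval x * Real.cos (2*ω*x)))
        + ∫ x in (-1:ℝ)..1, ∑ l ∈ Finset.range ((k+1)/2), ((2*(k-1-2*l)+1:ℕ):ℝ) *
            ((legendreP j).eval x * (legendreP (k-1-2*l)).eval x * Real.cos (2*ω*x)) := by
        exact intervalIntegral.integral_add hintsum1 hintsum2
    _ = (∑ l ∈ Finset.range ((j+1)/2), ∫ x in (-1:ℝ)..1, ((2*(j-1-2*l)+1:ℕ):ℝ) *
            ((legendreP (j-1-2*l)).eval x * (legendreP k).eval x * Real.cos (2*ω*x)))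
        + ∑ l ∈ Finset.range ((k+1)/2), ∫ x in (-1:ℝ)..1, ((2*(k-1-2*l)+1:ℕ):ℝ) *
            ((legendreP j).eval x * (legendreP (k-1-2*l)).eval x * Real.cos (2*ω*x)) := by
        congr 1
        · exact intervalIntegral.integral_finset_sum
            (fun l _ => (continuous_const.mul (contP _ _)).intervalIntegrable _ _)
        · exact intervalIntegral.integral_finset_sum
            (fun l _ => (continuous_const.mul (contP _ _)).intervalIntegrable _ _)
    _ = _ := by
        congr 1
        · apply Finset.sum_congr rfl; intro l _
          rw [intervalIntegral.integral_const_mul]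
        · apply Finset.sum_congr rfl; intro l _
          rw [intervalIntegral.integral_const_mul]
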